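/- With the setup above and 0 < k < G, ε = 0, the normalized advantage of a correct response A⁺ = (1 − μ)/σ equals √((1−p)/p), and the normalized advantage of an incorrect response A⁻ = (−λ − μ)/σ equals −√(p/(1−p)); in particular both are independent of λ. -/

import Mathlib

/-! Both numerators carry the factor `1 + λ` of `σ`: `1 - μ = (1 + λ)(1 - p)` and
`-λ - μ = -(1 + λ) p`. After cancelling it, what remains is `(1 - p) / √(p (1 - p))` and
`-p / √(p (1 - p))`, i.e. `√((1 - p) / p)` and `-√(p / (1 - p))`. -/

theorem Real.div_sqrt_mul_eq_sqrt_div {a b : ℝ} (ha : 0 ≤ a) (hb : 0 ≤ b) :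
    a / √(b * a) = √(a / b) := by
  rw [Real.sqrt_mul' b ha, mul_comm, ← div_div, Real.div_sqrt, Real.sqrt_div' a hb]

theorem stmt_2_general (G k : ℕ) (hkG : k < G) (l : ℝ) (hl : 0 < l)
    (p μ σ : ℝ) (hp : p = (k : ℝ) / G) (hμ : μ = (1 + l) * p - l)
    (hσ : σ = (1 + l) * Real.sqrt (p * (1 - p))) :
    (1 - μ) / σ = Real.sqrt ((1 - p) / p) ∧
    (-l - μ) / σ = -Real.sqrt (p / (1 - p)) := by
  have hp0 : 0 ≤ p := hp ▸ by positivity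
  have hp1 : 0 ≤ 1 - p := by
    rw [sub_nonneg, hp]
    exact div_le_one_of_le₀ (by exact_mod_cast hkG.le) (Nat.cast_nonneg G)
  have hl1 : 1 + l ≠ 0 := by positivity
  constructor
  · calc (1 - μ) / σ = (1 + l) * (1 - p) / ((1 + l) * √(p * (1 - p))) := by
          rw [hμ, hσ]; ring_nf
      _ = √((1 - p) / p) := by
          rw [mul_div_mul_left _ _ hl1, Real.div_sqrt_mul_eq_sqrt_div hp1 hp0]
  · calc (-l - μ) / σ = -((1 + l) * p / ((1 + l) * √((1 - p) * p))) := by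
          rw [hμ, hσ, mul_comm p, ← neg_div]; ring_nf
      _ = -√(p / (1 - p)) := by
          rw [mul_div_mul_left _ _ hl1, Real.div_sqrt_mul_eq_sqrt_div hp0 hp1]

theorem stmt_2 (G k : ℕ) (hG : 0 < G) (hk0 : 0 < k) (hkG : k < G) (l : ℝ) (hl : 0 < l)
    (p μ σ : ℝ) (hp : p = (k : ℝ) / G) (hμ : μ = (1 + l) * p - l)
    (hσ : σ = (1 + l) * Real.sqrt (p * (1 - p))) :
    (1 - μ) / σ = Real.sqrt ((1 - p) / p) ∧
    (-l - μ) / σ = -Real.sqrt (p / (1 - p)) :=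
  stmt_2_general G k hkG l hl p μ σ hp hμ hσ
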